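/- Let a < b be real numbers and let J_1, ..., J_k be pairwise disjoint intervals whose union is [a,b]. For each s \in [k], let h_s : [a,b] \to \mathbb{R} be Borel measurable, of bounded variation on [a,b] with total variation V_a^b(h_s) \le V, and bounded with \sup_{x \in [a,b]} |h_s(x)| \le M. Define g(x) = \sum_{s=1}^k 1[x \in J_s] \cdot h_s(x) for x \in [a,b]. Then for any Borel probability measures P and Q on \mathbb{R} with P([a,b]) = Q([a,b]) = 1, |\int_{[a,b]} g \, dP - \int_{[a,b]} g \, dQ| \le k (2M + V) \cdot d_{KS}(P, Q). -/

import Mathlib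

/-!
A piece `1_J · h` with `J` order-connected has variation at most `V + 2M` on `[a,b]`:
since `J = upperClosure J ∩ lowerClosure J`, `1_J` is the product of a monotone and an
antitone `{0,1}`-valued function and so has variation at most `2`. Hence `g` has variation
at most `k (2M + V)`. The Jordan decomposition `f = p - q` of a function of bounded
variation, with `(p b - p a) + (q b - q a)` equal to its variation, reduces the estimate to
monotone functions `m`. For those the layer-cake formula writes `∫ m dP - ∫ m dQ` as
`∫ (P {m > t} - Q {m > t}) dt` over an interval of length `m b - m a`. Each `{m > t}` is an
upper set, i.e. a half-line `(c, ∞)` or `[c, ∞)`, so its `P`- and `Q`-measures differ by at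
most the Kolmogorov–Smirnov distance (for `[c, ∞)` after letting `x ↑ c` in
`F_P x - F_Q x`).
-/

open MeasureTheory Set Filter Topology

lemma IsUpperSet.eq_Ioi_or_eq_Ici {α : Type*} [ConditionallyCompleteLinearOrder α]
    {U : Set α} (hU : IsUpperSet U) (hne : U.Nonempty) (hbdd : BddBelow U) :
    U = Ioi (sInf U) ∨ U = Ici (sInf U) := by
  by_cases hmem : sInf U ∈ U
  · exact .inr <| Subset.antisymm (fun x hx => csInf_le hbdd hx) (hU.Ici_subset hmem)
  · refine .inl <| Subset.antisymm (fun x hx => (csInf_le hbdd hx).lt_of_ne ?_) fun x hx => ?_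
    · rintro rfl; exact hmem hx
    · obtain ⟨y, hy, hyx⟩ := exists_lt_of_csInf_lt hne hx
      exact hU hyx.le hy

lemma IsUpperSet.eq_univ_of_not_bddBelow {α : Type*} [LinearOrder α] {U : Set α}
    (hU : IsUpperSet U) (hbdd : ¬BddBelow U) : U = univ := by
  refine eq_univ_of_forall fun x => ?_
  obtain ⟨y, hy, hyx⟩ := not_bddBelow_iff.1 hbdd x
  exact hU hyx.le hy

section Variation

variable {α E ι : Type*} [LinearOrder α] [SeminormedAddCommGroup E]

lemma eVariationOn_add_le (f g : α → E) (s : Set α) :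
    eVariationOn (f + g) s ≤ eVariationOn f s + eVariationOn g s := by
  refine iSup_le fun ⟨n, u, hu, us⟩ => ?_
  calc ∑ i ∈ Finset.range n, edist ((f + g) (u (i + 1))) ((f + g) (u i))
      ≤ ∑ i ∈ Finset.range n,
          (edist (f (u (i + 1))) (f (u i)) + edist (g (u (i + 1))) (g (u i))) :=
        Finset.sum_le_sum fun i _ => edist_add_add_le _ _ _ _
    _ ≤ eVariationOn f s + eVariationOn g s := by
        rw [Finset.sum_add_distrib]
        exact add_le_add (eVariationOn.sum_le hu us) (eVariationOn.sum_le hu us)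

lemma eVariationOn_sum_le (t : Finset ι) (f : ι → α → E) (s : Set α) :
    eVariationOn (∑ i ∈ t, f i) s ≤ ∑ i ∈ t, eVariationOn (f i) s := by
  classical
  induction t using Finset.induction_on with
  | empty => simp [eVariationOn.eq_zero_iff]
  | insert i t hi ih =>
    rw [Finset.sum_insert hi, Finset.sum_insert hi]
    exact (eVariationOn_add_le _ _ s).trans (add_le_add_right ih _)

lemma BoundedVariationOn.finset_sum {t : Finset ι} {f : ι → α → E} {s : Set α}
    (hf : ∀ i ∈ t, BoundedVariationOn (f i) s) :
    BoundedVariationOn (∑ i ∈ t, f i) s :=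
  ne_top_of_le_ne_top (ENNReal.sum_ne_top.2 hf) (eVariationOn_sum_le t f s)

lemma toReal_eVariationOn_sum_le {t : Finset ι} {f : ι → α → E} {s : Set α}
    (hf : ∀ i ∈ t, BoundedVariationOn (f i) s) :
    (eVariationOn (∑ i ∈ t, f i) s).toReal ≤ ∑ i ∈ t, (eVariationOn (f i) s).toReal := by
  rw [← ENNReal.toReal_sum hf]
  exact ENNReal.toReal_mono (ENNReal.sum_ne_top.2 hf) (eVariationOn_sum_le t f s)

lemma MonotoneOn.eVariationOn_le_ofReal_sub {f : α → ℝ} {s : Set α} (hf : MonotoneOn f s)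
    {lo hi : ℝ} (hlo : ∀ x ∈ s, lo ≤ f x) (hhi : ∀ x ∈ s, f x ≤ hi) :
    eVariationOn f s ≤ ENNReal.ofReal (hi - lo) := by
  rw [eVariationOn.eq_biSup_inter_Icc]
  refine iSup₂_le fun ⟨x, y⟩ ⟨hx, hy, _⟩ => ?_
  rw [hf.eVariationOn_eq hx hy]
  exact ENNReal.ofReal_le_ofReal (by linarith [hlo x hx, hhi y hy])

lemma IsUpperSet.eVariationOn_indicator_one_le {U : Set α} (hU : IsUpperSet U) (s : Set α) :
    eVariationOn (U.indicator (1 : α → ℝ)) s ≤ 1 := by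
  have hmono : Monotone (U.indicator (1 : α → ℝ)) := fun x y hxy => by
    by_cases hx : x ∈ U
    · simp [hx, hU hxy hx]
    · simp [hx, indicator_nonneg]
  simpa using (hmono.monotoneOn s).eVariationOn_le_ofReal_sub (lo := 0) (hi := 1)
    (fun x _ => indicator_nonneg (fun _ _ => zero_le_one) x)
    (fun x _ => indicator_le_self' (fun _ _ => zero_le_one) x)

lemma IsLowerSet.eVariationOn_indicator_one_le {L : Set α} (hL : IsLowerSet L) (s : Set α) :
    eVariationOn (L.indicator (1 : α → ℝ)) s ≤ 1 := by
  rw [← eVariationOn.comp_ofDual]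
  exact hL.toDual.eVariationOn_indicator_one_le _

lemma Set.OrdConnected.eVariationOn_indicator_one_le {J : Set α} (hJ : J.OrdConnected)
    (s : Set α) : eVariationOn (J.indicator (1 : α → ℝ)) s ≤ 2 := by
  have hle_one (K : Set α) (x : α) : ‖K.indicator (1 : α → ℝ) x‖ₑ ≤ 1 :=
    (enorm_indicator_le_enorm_self _ _).trans (by simp)
  rw [← hJ.upperClosure_inter_lowerClosure, inter_indicator_one]
  calc _ ≤ 1 * eVariationOn ((lowerClosure J : Set α).indicator 1) s +
        1 * eVariationOn ((upperClosure J : Set α).indicator 1) s :=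
        eVariation_mul_le (fun x _ => hle_one _ x) (fun x _ => hle_one _ x)
    _ ≤ 1 * 1 + 1 * 1 := by
        gcongr
        exacts [(lowerClosure J).lower.eVariationOn_indicator_one_le s,
          (upperClosure J).upper.eVariationOn_indicator_one_le s]
    _ = 2 := by norm_num

lemma Set.OrdConnected.eVariationOn_indicator_le {J : Set α} (hJ : J.OrdConnected)
    {h : α → ℝ} {s : Set α} {M : ℝ} (hM : ∀ x ∈ s, |h x| ≤ M) :
    eVariationOn (J.indicator h) s ≤ eVariationOn h s + 2 * ENNReal.ofReal M := by
  have hJh : J.indicator h = J.indicator 1 * h := by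
    ext x
    by_cases hx : x ∈ J <;> simp [hx]
  rw [hJh]
  calc _ ≤ 1 * eVariationOn h s + ENNReal.ofReal M * eVariationOn (J.indicator 1) s :=
        eVariation_mul_le (fun x _ => (enorm_indicator_le_enorm_self _ _).trans (by simp))
          (fun x hx => by rw [Real.enorm_eq_ofReal_abs]; exact ENNReal.ofReal_le_ofReal (hM x hx))
    _ ≤ eVariationOn h s + ENNReal.ofReal M * 2 := by
        rw [one_mul]
        gcongr
        exact hJ.eVariationOn_indicator_one_le s
    _ = eVariationOn h s + 2 * ENNReal.ofReal M := by rw [mul_comm]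

lemma Set.OrdConnected.boundedVariationOn_indicator {J : Set α} (hJ : J.OrdConnected)
    {h : α → ℝ} {s : Set α} (hh : BoundedVariationOn h s) {M : ℝ}
    (hM : ∀ x ∈ s, |h x| ≤ M) :
    BoundedVariationOn (J.indicator h) s :=
  ne_top_of_le_ne_top (by finiteness) (hJ.eVariationOn_indicator_le hM)

lemma Set.OrdConnected.toReal_eVariationOn_indicator_le {J : Set α} (hJ : J.OrdConnected)
    {h : α → ℝ} {s : Set α} (hs : s.Nonempty) (hh : BoundedVariationOn h s) {M : ℝ}
    (hM : ∀ x ∈ s, |h x| ≤ M) :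
    (eVariationOn (J.indicator h) s).toReal ≤ (eVariationOn h s).toReal + 2 * M := by
  obtain ⟨x, hx⟩ := hs
  have hM0 : 0 ≤ M := (abs_nonneg _).trans (hM x hx)
  calc _ ≤ (eVariationOn h s + 2 * ENNReal.ofReal M).toReal :=
        ENNReal.toReal_mono (by finiteness) (hJ.eVariationOn_indicator_le hM)
    _ = (eVariationOn h s).toReal + 2 * M := by
        rw [ENNReal.toReal_add hh (by finiteness), ENNReal.toReal_mul, ENNReal.toReal_ofReal hM0]
        norm_num

end Variation

lemma restrict_eq_self_of_prob_eq_one {α : Type*} [MeasurableSpace α] {μ : Measure α}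
    [IsProbabilityMeasure μ] {s : Set α} (hs : MeasurableSet s) (h : μ s = 1) :
    μ.restrict s = μ :=
  Measure.restrict_eq_self_of_ae_mem ((mem_ae_iff_prob_eq_one hs).2 h)

section KolmogorovSmirnov

variable {P Q : Measure ℝ} [IsProbabilityMeasure P] [IsProbabilityMeasure Q]

lemma abs_measureReal_Iic_sub_le_iSup (x : ℝ) :
    |P.real (Iic x) - Q.real (Iic x)| ≤ ⨆ y, |P.real (Iic y) - Q.real (Iic y)| := by
  refine le_ciSup (f := fun y => |P.real (Iic y) - Q.real (Iic y)|) ⟨1, ?_⟩ x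
  rintro _ ⟨y, rfl⟩
  exact abs_sub_le_of_nonneg_of_le measureReal_nonneg measureReal_le_one measureReal_nonneg
    measureReal_le_one

lemma abs_measureReal_Iio_sub_le {D : ℝ} (hD : ∀ x, |P.real (Iic x) - Q.real (Iic x)| ≤ D)
    (x : ℝ) : |P.real (Iio x) - Q.real (Iio x)| ≤ D := by
  obtain ⟨u, hu_mono, hu_lt, hu_lim⟩ := exists_seq_strictMono_tendsto x
  have hlim (μ : Measure ℝ) [IsFiniteMeasure μ] :
      Tendsto (fun n => μ.real (Iic (u n))) atTop (𝓝 (μ.real (Iio x))) := by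
    rw [← iUnion_Iic_eq_Iio_of_lt_of_tendsto hu_lt hu_lim]
    exact (ENNReal.tendsto_toReal (measure_ne_top μ _)).comp
      (tendsto_measure_iUnion_atTop fun m n hmn => Iic_subset_Iic.2 (hu_mono.monotone hmn))
  exact le_of_tendsto' ((hlim P).sub (hlim Q)).abs fun n => hD (u n)

lemma abs_measureReal_compl_sub {L : Set ℝ} (hL : MeasurableSet L) :
    |P.real Lᶜ - Q.real Lᶜ| = |P.real L - Q.real L| := by
  rw [probReal_compl_eq_one_sub hL, probReal_compl_eq_one_sub hL, abs_sub_comm]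
  ring_nf

lemma abs_measureReal_sub_le_of_isUpperSet {D : ℝ}
    (hD : ∀ x, |P.real (Iic x) - Q.real (Iic x)| ≤ D) {U : Set ℝ} (hU : IsUpperSet U) :
    |P.real U - Q.real U| ≤ D := by
  have hD0 : 0 ≤ D := (abs_nonneg _).trans (hD 0)
  rcases U.eq_empty_or_nonempty with rfl | hne
  · simpa using hD0
  by_cases hbdd : BddBelow U
  · rcases hU.eq_Ioi_or_eq_Ici hne hbdd with hU' | hU' <;> rw [hU']
    · rw [← compl_Iic, abs_measureReal_compl_sub measurableSet_Iic]
      exact hD _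
    · rw [← compl_Iio, abs_measureReal_compl_sub measurableSet_Iio]
      exact abs_measureReal_Iio_sub_le hD _
  · simpa [hU.eq_univ_of_not_bddBelow hbdd] using hD0

lemma abs_integral_sub_le_of_monotone {D : ℝ}
    (hD : ∀ x, |P.real (Iic x) - Q.real (Iic x)| ≤ D) {m : ℝ → ℝ} (hm : Monotone m)
    {lo hi : ℝ} (hlo : ∀ x, lo ≤ m x) (hhi : ∀ x, m x ≤ hi) :
    |∫ x, m x ∂P - ∫ x, m x ∂Q| ≤ (hi - lo) * D := by
  set R := hi - lo
  have hR : 0 ≤ R := sub_nonneg.2 ((hlo 0).trans (hhi 0))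
  have hlayercake (μ : Measure ℝ) [IsProbabilityMeasure μ] :
      ∫ x, m x ∂μ = lo + ∫ t in Ioc 0 R, μ.real {x | t < m x - lo} := by
    have hm_int : Integrable m μ := .of_bound hm.measurable.aestronglyMeasurable (max |lo| |hi|)
      (.of_forall fun x => abs_le_max_abs_abs (hlo x) (hhi x))
    have hm_sub_int : Integrable (fun x => m x - lo) μ := hm_int.sub (integrable_const lo)
    have hvanish : ∀ t ∈ Ioi 0 \ Ioc 0 R, μ.real {x | t < m x - lo} = 0 := by
      rintro t ⟨ht0, htR⟩
      have hRt : R < t := lt_of_not_ge fun h => htR ⟨ht0, h⟩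
      have hempty : {x | t < m x - lo} = ∅ :=
        eq_empty_of_forall_notMem fun x (hx : t < m x - lo) => by linarith [hhi x]
      rw [hempty, measureReal_empty]
    calc ∫ x, m x ∂μ = lo + ∫ x, (m x - lo) ∂μ := by
          rw [integral_sub hm_int (integrable_const lo), integral_const, probReal_univ, one_smul]
          ring
      _ = lo + ∫ t in Ioc 0 R, μ.real {x | t < m x - lo} := by
          rw [hm_sub_int.integral_eq_integral_meas_lt (.of_forall fun x => sub_nonneg.2 (hlo x)),
            setIntegral_eq_of_subset_of_forall_sdiff_eq_zero measurableSet_Ioi Ioc_subset_Ioi_self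
              hvanish]
  have htail_int (μ : Measure ℝ) [IsProbabilityMeasure μ] :
      IntegrableOn (fun t => μ.real {x | t < m x - lo}) (Ioc 0 R) :=
    (AntitoneOn.integrableOn_isCompact isCompact_Icc fun s _ t _ hst =>
      measureReal_mono fun x (hx : t < m x - lo) => hst.trans_lt hx).mono_set Ioc_subset_Icc_self
  have hupper (t : ℝ) : IsUpperSet {x | t < m x - lo} := fun x y hxy (hx : t < m x - lo) =>
    hx.trans_le (sub_le_sub_right (hm hxy) lo)
  rw [hlayercake P, hlayercake Q, add_sub_add_left_eq_sub,
    ← integral_sub (htail_int P) (htail_int Q), ← Real.norm_eq_abs]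
  calc _ ≤ D * volume.real (Ioc (0 : ℝ) R) :=
        norm_setIntegral_le_of_norm_le_const measure_Ioc_lt_top fun t _ =>
          abs_measureReal_sub_le_of_isUpperSet hD (hupper t)
    _ = R * D := by rw [Real.volume_real_Ioc_of_le hR, sub_zero, mul_comm]

lemma abs_integral_sub_le_of_monotoneOn {D : ℝ}
    (hD : ∀ x, |P.real (Iic x) - Q.real (Iic x)| ≤ D) {m : ℝ → ℝ} {a b : ℝ}
    (hm : MonotoneOn m (Icc a b)) (hP : P (Icc a b) = 1) (hQ : Q (Icc a b) = 1) :
    |∫ x, m x ∂P - ∫ x, m x ∂Q| ≤ (m b - m a) * D := by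
  have hab : a ≤ b := nonempty_Icc.1 (nonempty_of_measure_ne_zero (hP ▸ one_ne_zero))
  set m' := IccExtend hab ((Icc a b).domRestrict m)
  have hm' : Monotone m' := (monotoneOn_iff_monotone.1 hm).IccExtend hab
  have hm'_mem (x : ℝ) : m' x ∈ Icc (m a) (m b) := by
    have hx := (projIcc a b hab x).2
    exact ⟨hm (left_mem_Icc.2 hab) hx hx.1, hm hx (right_mem_Icc.2 hab) hx.2⟩
  have hae (μ : Measure ℝ) [IsProbabilityMeasure μ] (hμ : μ (Icc a b) = 1) :
      ∫ x, m x ∂μ = ∫ x, m' x ∂μ := by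
    have hμ' : ∀ᵐ x ∂μ, x ∈ Icc a b := (mem_ae_iff_prob_eq_one measurableSet_Icc).2 hμ
    exact integral_congr_ae <| hμ'.mono fun x hx =>
      (IccExtend_of_mem hab ((Icc a b).domRestrict m) hx).symm
  rw [hae P hP, hae Q hQ]
  exact abs_integral_sub_le_of_monotone hD hm' (fun x => (hm'_mem x).1) (fun x => (hm'_mem x).2)

lemma abs_integral_sub_le_of_boundedVariationOn {D : ℝ}
    (hD : ∀ x, |P.real (Iic x) - Q.real (Iic x)| ≤ D) {f : ℝ → ℝ} {a b : ℝ}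
    (hf : BoundedVariationOn f (Icc a b)) (hP : P (Icc a b) = 1) (hQ : Q (Icc a b) = 1) :
    |∫ x, f x ∂P - ∫ x, f x ∂Q| ≤ (eVariationOn f (Icc a b)).toReal * D := by
  have hab : a ≤ b := nonempty_Icc.1 (nonempty_of_measure_ne_zero (hP ▸ one_ne_zero))
  obtain ⟨p, q, hp, hq, rfl, hpq⟩ :=
    hf.locallyBoundedVariationOn.exists_monotoneOn_sub_monotoneOn'
  have hint {r : ℝ → ℝ} (hr : MonotoneOn r (Icc a b)) (μ : Measure ℝ)
      [IsProbabilityMeasure μ] (hμ : μ (Icc a b) = 1) : Integrable r μ := by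
    have := hr.integrableOn_of_measure_ne_top (isLeast_Icc hab) (isGreatest_Icc hab)
      (measure_ne_top μ _) measurableSet_Icc
    rwa [IntegrableOn, restrict_eq_self_of_prob_eq_one measurableSet_Icc hμ] at this
  simp only [Pi.sub_apply]
  rw [integral_sub (hint hp P hP) (hint hq P hP), integral_sub (hint hp Q hQ) (hint hq Q hQ)]
  calc _ = |(∫ x, p x ∂P - ∫ x, p x ∂Q) - (∫ x, q x ∂P - ∫ x, q x ∂Q)| := by ring_nf
    _ ≤ |∫ x, p x ∂P - ∫ x, p x ∂Q| + |∫ x, q x ∂P - ∫ x, q x ∂Q| := abs_sub _ _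
    _ ≤ (p b - p a) * D + (q b - q a) * D :=
        add_le_add (abs_integral_sub_le_of_monotoneOn hD hp hP hQ)
          (abs_integral_sub_le_of_monotoneOn hD hq hP hQ)
    _ = variationOnFromTo (p - q) (Icc a b) a b * D := by
        rw [← hpq a (left_mem_Icc.2 hab) b (right_mem_Icc.2 hab)]
        ring
    _ = (eVariationOn (p - q) (Icc a b)).toReal * D := by
        rw [variationOnFromTo.eq_of_le _ _ hab, inter_self]

end KolmogorovSmirnov

theorem integral_diff_le_of_piecewise_boundedVariation_general
    (a b : ℝ) (hab : a < b) (k : ℕ)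
    (J : Fin k → Set ℝ)
    (hJint : ∀ s, (J s).OrdConnected)
    (h : Fin k → ℝ → ℝ)
    (hBV : ∀ s, BoundedVariationOn (h s) (Set.Icc a b))
    (V : ℝ) (hV : ∀ s, (eVariationOn (h s) (Set.Icc a b)).toReal ≤ V)
    (M : ℝ) (hM : ∀ s, ∀ x ∈ Set.Icc a b, |h s x| ≤ M)
    (g : ℝ → ℝ) (hg : ∀ x, g x = ∑ s : Fin k, (J s).indicator (h s) x)
    (P Q : Measure ℝ) [IsProbabilityMeasure P] [IsProbabilityMeasure Q]
    (hP : P (Set.Icc a b) = 1) (hQ : Q (Set.Icc a b) = 1) :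
    |(∫ x in Set.Icc a b, g x ∂P) - ∫ x in Set.Icc a b, g x ∂Q| ≤
      (k : ℝ) * (2 * M + V) *
        ⨆ x : ℝ, |(P (Set.Iic x)).toReal - (Q (Set.Iic x)).toReal| := by
  set f := fun s => (J s).indicator (h s)
  have hg_eq : g = ∑ s, f s := funext fun x => (hg x).trans (Finset.sum_apply x _ _).symm
  have hf (s : Fin k) : BoundedVariationOn (f s) (Icc a b) :=
    (hJint s).boundedVariationOn_indicator (hBV s) (hM s)
  have hD := abs_measureReal_Iic_sub_le_iSup (P := P) (Q := Q)
  rw [restrict_eq_self_of_prob_eq_one measurableSet_Icc hP,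
    restrict_eq_self_of_prob_eq_one measurableSet_Icc hQ, hg_eq]
  calc _ ≤ (eVariationOn (∑ s, f s) (Icc a b)).toReal * _ :=
        abs_integral_sub_le_of_boundedVariationOn hD
          (BoundedVariationOn.finset_sum fun s _ => hf s) hP hQ
    _ ≤ (∑ _s : Fin k, (2 * M + V)) * _ := by
        gcongr
        · exact (abs_nonneg _).trans (hD 0)
        refine (toReal_eVariationOn_sum_le fun s _ => hf s).trans (Finset.sum_le_sum fun s _ => ?_)
        linarith [(hJint s).toReal_eVariationOn_indicator_le (nonempty_Icc.2 hab.le) (hBV s) (hM s),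
          hV s]
    _ = _ := by rw [Finset.sum_const, Finset.card_univ, Fintype.card_fin, nsmul_eq_mul]; rfl

/-- Let `J_1, …, J_k` be pairwise disjoint intervals whose union is
`[a,b]`, and for each `s` let `h_s : [a,b] → ℝ` be Borel measurable, of bounded variation
with total variation at most `V`, and bounded by `M`. For
`g x = ∑_s 1[x ∈ J_s] · h_s x` and Borel probability measures `P, Q` concentrated on
`[a,b]`, `|∫_{[a,b]} g dP - ∫_{[a,b]} g dQ| ≤ k (2M + V) · d_KS(P, Q)`. -/
theorem integral_diff_le_of_piecewise_boundedVariation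
    (a b : ℝ) (hab : a < b) (k : ℕ) (hk : 1 ≤ k)
    (J : Fin k → Set ℝ)
    (hJint : ∀ s, (J s).OrdConnected)
    (hJdisj : ∀ s t : Fin k, s ≠ t → Disjoint (J s) (J t))
    (hJunion : (⋃ s, J s) = Set.Icc a b)
    (h : Fin k → ℝ → ℝ) (hmeas : ∀ s, Measurable (h s))
    (hBV : ∀ s, BoundedVariationOn (h s) (Set.Icc a b))
    (V : ℝ) (hV : ∀ s, (eVariationOn (h s) (Set.Icc a b)).toReal ≤ V)
    (M : ℝ) (hM : ∀ s, ∀ x ∈ Set.Icc a b, |h s x| ≤ M)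
    (g : ℝ → ℝ) (hg : ∀ x, g x = ∑ s : Fin k, (J s).indicator (h s) x)
    (P Q : Measure ℝ) [IsProbabilityMeasure P] [IsProbabilityMeasure Q]
    (hP : P (Set.Icc a b) = 1) (hQ : Q (Set.Icc a b) = 1) :
    |(∫ x in Set.Icc a b, g x ∂P) - ∫ x in Set.Icc a b, g x ∂Q| ≤
      (k : ℝ) * (2 * M + V) *
        ⨆ x : ℝ, |(P (Set.Iic x)).toReal - (Q (Set.Iic x)).toReal| :=
  integral_diff_le_of_piecewise_boundedVariation_general a b hab k J hJint h hBV V hV M hM g hg P Q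
    hP hQ
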